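/- Let S be a countable set of positive reals having 0 as an accumulation point, and let G = iso(U_S) be the group of bijective self-isometries of U_S with the topology of pointwise convergence on the metric space U_S. Then for every convex linear ordering ≺ on U_S, the orbit {≺^g : g ∈ G} of ≺ under the action x ≺^g y iff g^{-1}(x) ≺ g^{-1}(y) is dense in the space cLO(U_S) of convex linear orderings of U_S (topologized as a subspace of 2^{U_S × U_S}); that is, the G-flow cLO(U_S) is minimal. -/

import Mathlib

open Classical

/-- Membership in `U_S` : the support of `x : S → ℚ` is contained in the range of some
strictly decreasing sequence of elements of `S` converging to `0`. -/
def USsupp (S : Set ℝ) (x : S → ℚ) : Prop :=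
  ∃ f : ℕ → ℝ, StrictAnti f ∧ (∀ i, f i ∈ S) ∧
    Filter.Tendsto f Filter.atTop (nhds 0) ∧
    ∀ s : S, x s ≠ 0 → ∃ i, (s : ℝ) = f i

/-- The space `U_S`, completion of `Q_S`. -/
def US (S : Set ℝ) := {x : S → ℚ // USsupp S x}

/-- The distance on `U_S` : `d x y = min {s ∈ S | x and y agree above s}` for `x ≠ y`,
and `d x x = 0`. -/
noncomputable def dU (S : Set ℝ) (x y : US S) : ℝ :=
  if x = y then 0
  else sInf {r : ℝ | r ∈ S ∧ ∀ t : S, r < (t : ℝ) → x.1 t = y.1 t}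

/-- `r` is a strict total order (irreflexive, transitive, trichotomous). -/
def IsSTO {X : Type*} (r : X → X → Prop) : Prop :=
  (∀ x, ¬ r x x) ∧ (∀ x y z, r x y → r y z → r x z) ∧ (∀ x y, r x y ∨ x = y ∨ r y x)

/-- `r` is a convex linear ordering with respect to the distance `d` : a strict total
order for which every closed metric ball is an interval (equivalently,
`r x y → r y z → d x y ≤ d x z ∧ d y z ≤ d x z`). -/
def IsConvexSTO {X : Type*} (d : X → X → ℝ) (r : X → X → Prop) : Prop :=
  IsSTO r ∧ ∀ x y z, r x y → r y z → d x y ≤ d x z ∧ d y z ≤ d x z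

/-- The group `iso(U_S)` of bijective self-isometries of `U_S`. -/
def IsoU (S : Set ℝ) := {g : US S ≃ US S // ∀ x y, dU S (g x) (g y) = dU S x y}

/-- The space `cLO(U_S)` of convex linear orderings of `U_S` (as Boolean relations),
a subspace of `2^{U_S × U_S}` with the product topology. -/
def cLOU (S : Set ℝ) :=
  {r : US S → US S → Bool // IsConvexSTO (dU S) (fun x y => r x y = true)}

instance (S : Set ℝ) : TopologicalSpace (cLOU S) :=
  inferInstanceAs (TopologicalSpace
    {r : US S → US S → Bool // IsConvexSTO (dU S) (fun x y => r x y = true)})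

/-- The action of `iso(U_S)` on `cLO(U_S)` : `x <^g y` iff `g⁻¹ x < g⁻¹ y`. -/
def actU (S : Set ℝ) (g : IsoU S) (r : cLOU S) : cLOU S :=
  ⟨fun x y => r.1 (g.1.symm x) (g.1.symm y), by
    obtain ⟨⟨hirr, htr, htri⟩, hconv⟩ := r.2
    have e : ∀ a b : US S, dU S (g.1.symm a) (g.1.symm b) = dU S a b := by
      intro a b
      have := g.2 (g.1.symm a) (g.1.symm b)
      simpa using this.symm
    refine ⟨⟨fun x => hirr _, fun x y z hxy hyz => htr _ _ _ hxy hyz, fun x y => ?_⟩,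
      fun x y z hxy hyz => ?_⟩
    · rcases htri (g.1.symm x) (g.1.symm y) with h | h | h
      · exact Or.inl h
      · exact Or.inr (Or.inl (g.1.symm.injective h))
      · exact Or.inr (Or.inr h)
    · have h := hconv _ _ _ hxy hyz
      simpa only [e] using h⟩

/-!
Fix convex orders `<` (the one whose orbit we move) and `≺` (the target), and finitely many points
`x 0 ≺ ⋯ ≺ x (n-1)`. It suffices to find `a 0 < ⋯ < a (n-1)` with `d (a i) (a j) = d (x i) (x j)`:
`U_S` is ultrahomogeneous (a finite partial isometry extends one point at a time, each step a
translation exchanging two open balls), and an isometry carrying each `a i` to `x i` transports `<`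
to an order that agrees with `≺` on the `x i`.

The `a i` are built by induction on `n`. Let `D = d (x 0) (x (n-1))`, the largest distance in the
chain, and `k` the first index with `d (x 0) (x k) = D`; then `x 0, …, x (k-1)` lie in one open ball
of radius `D` and are at distance exactly `D` from all later points. A closed ball of radius `D ∈ S`
contains infinitely many disjoint open balls of radius `D` (one per rational value at level `D`),
which a convex order lists in some order. Choosing `n` of them in `<`-order, the first block goes
into the first one and the rest, recursively, into the later ones; convexity then makes the whole
configuration `<`-increasing.
-/

open Filter Topology Set

structure IsUltrametric {X : Type*} (d : X → X → ℝ) : Prop where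
  dist_self : ∀ x, d x x = 0
  eq_of_dist_eq_zero : ∀ {x y}, d x y = 0 → x = y
  dist_comm : ∀ x y, d x y = d y x
  dist_le_max : ∀ x y z, d x z ≤ max (d x y) (d y z)

def Ascends {α : Type*} (R : α → α → Prop) (n : ℕ) (x : ℕ → α) : Prop :=
  ∀ i j, i < j → j < n → R (x i) (x j)

def SameDists {α : Type*} (d : α → α → ℝ) (n : ℕ) (a x : ℕ → α) : Prop :=
  ∀ i j, i < n → j < n → d (a i) (a j) = d (x i) (x j)

def glue {α : Type*} (k : ℕ) (u v : ℕ → α) : ℕ → α := fun i => if i < k then u i else v (i - k)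

section Ultrametric

variable {X : Type*} {d : X → X → ℝ}

theorem IsUltrametric.nonneg (hd : IsUltrametric d) (x y : X) : 0 ≤ d x y := by
  simpa [hd.dist_self, hd.dist_comm y x] using hd.dist_le_max x y x

theorem IsUltrametric.pos (hd : IsUltrametric d) {x y : X} (h : x ≠ y) : 0 < d x y :=
  (hd.nonneg x y).lt_of_ne fun h0 => h (hd.eq_of_dist_eq_zero h0.symm)

theorem IsUltrametric.dist_eq_of_lt (hd : IsUltrametric d) {x y z : X} (h : d x y < d y z) :
    d x z = d y z := by
  refine le_antisymm ((hd.dist_le_max x y z).trans (max_le h.le le_rfl)) ?_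
  have := hd.dist_le_max y x z
  rw [hd.dist_comm y x] at this
  exact (le_max_iff.1 this).resolve_left h.not_ge

theorem IsUltrametric.dist_eq_of_near (hd : IsUltrametric d) {p q u v : X}
    (hu : d u p < d p q) (hv : d v q < d p q) : d u v = d p q := by
  have huq : d u q = d p q := hd.dist_eq_of_lt hu
  have hvu : d v u = d q u := hd.dist_eq_of_lt (by rwa [hd.dist_comm q u, huq])
  rw [hd.dist_comm u v, hvu, hd.dist_comm q u, huq]

theorem IsUltrametric.dist_lt_iff_of_dist_lt (hd : IsUltrametric d) {x y c : X} {r : ℝ}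
    (h : d x y < r) : d x c < r ↔ d y c < r := by
  constructor <;> intro hc
  · rw [hd.dist_comm] at h
    exact (hd.dist_le_max y x c).trans_lt (max_lt h hc)
  · exact (hd.dist_le_max x y c).trans_lt (max_lt h hc)

end Ultrametric

section ConvexOrder

variable {X : Type*} {d : X → X → ℝ} {R : X → X → Prop}

theorem IsSTO.ne (hR : IsSTO R) {a b : X} (h : R a b) : a ≠ b :=
  fun hab => hR.1 a (hab ▸ h)

theorem IsSTO.rel_iff_of_ascends (hR : IsSTO R) {n : ℕ} {x : ℕ → X} (hx : Ascends R n x)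
    {i j : ℕ} (hi : i < n) (hj : j < n) : R (x i) (x j) ↔ i < j := by
  refine ⟨fun h => ?_, fun h => hx i j h hj⟩
  rcases lt_trichotomy i j with hij | rfl | hji
  · exact hij
  · exact absurd h (hR.1 _)
  · exact absurd (hR.2.1 _ _ _ h (hx j i hji hi)) (hR.1 _)

theorem Ascends.mono {n m : ℕ} {x : ℕ → X} (hx : Ascends R n x) (hmn : m ≤ n) :
    Ascends R m x :=
  fun i j hij hj => hx i j hij (hj.trans_le hmn)

theorem Ascends.shift {n : ℕ} {x : ℕ → X} (hx : Ascends R n x) (k : ℕ) :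
    Ascends R (n - k) fun i => x (k + i) :=
  fun i j hij hj => hx _ _ (by omega) (by omega)

theorem IsConvexSTO.rel_of_near (hd : IsUltrametric d) (hR : IsConvexSTO d R) {p q u v : X}
    (hpq : R p q) (hu : d u p < d p q) (hv : d v q < d p q) : R u v := by
  have huq : R u q := by
    rcases hR.1.2.2 u q with h | rfl | h
    · exact h
    · exact absurd hu (by rw [hd.dist_comm]; exact lt_irrefl _)
    · exact absurd (hR.2 p q u hpq h).1 (by rw [hd.dist_comm p u]; exact hu.not_ge)
  have hduq : d u q = d p q := hd.dist_eq_of_lt hu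
  rcases hR.1.2.2 u v with h | rfl | h
  · exact h
  · exact absurd hduq hv.ne
  · exact absurd (hR.2 v u q h huq).2 (by rw [hduq]; exact hv.not_ge)

theorem IsConvexSTO.dist_le_of_ascends (hd : IsUltrametric d) (hR : IsConvexSTO d R) {n : ℕ}
    {x : ℕ → X} (hx : Ascends R n x) {lo hi i j : ℕ} (hi_lo : lo ≤ i) (hi_hi : i ≤ hi)
    (hj_lo : lo ≤ j) (hj_hi : j ≤ hi) (hn : hi < n) : d (x i) (x j) ≤ d (x lo) (x hi) := by
  wlog hij : i ≤ j generalizing i j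
  · rw [hd.dist_comm]; exact this hj_lo hj_hi hi_lo hi_hi (by omega)
  rcases hij.eq_or_lt with rfl | hij
  · rw [hd.dist_self]; exact hd.nonneg _ _
  have h₁ : d (x i) (x j) ≤ d (x i) (x hi) := by
    rcases hj_hi.eq_or_lt with rfl | hj
    · exact le_rfl
    · exact (hR.2 _ _ _ (hx i j hij (by omega)) (hx j hi hj hn)).1
  have h₂ : d (x i) (x hi) ≤ d (x lo) (x hi) := by
    rcases hi_lo.eq_or_lt with rfl | hlo
    · exact le_rfl
    · exact (hR.2 _ _ _ (hx lo i hlo (by omega)) (hx i hi (by omega) hn)).2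
  exact h₁.trans h₂

end ConvexOrder

theorem IsSTO.exists_ascends_enumeration {α : Type*} [Nonempty α] {R : α → α → Prop}
    (hR : IsSTO R) (s : Finset α) :
    ∃ x : ℕ → α, Ascends R s.card x ∧ (∀ i < s.card, x i ∈ s) ∧
      ∀ a ∈ s, ∃ i < s.card, x i = a := by
  have : IsStrictTotalOrder α R :=
    { trichotomous := fun a b hab hba => (hR.2.2 a b).resolve_left hab |>.resolve_right hba
      irrefl := hR.1
      trans := hR.2.1 }
  let := linearOrderOfSTO R
  set f := s.orderEmbOfFin rfl
  refine ⟨fun i => if h : i < s.card then f ⟨i, h⟩ else Classical.arbitrary α,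
    fun i j hij hj => ?_, fun i hi => ?_, fun a ha => ?_⟩
  · simp only [dif_pos hj, dif_pos (hij.trans hj)]
    exact f.strictMono (show (⟨i, hij.trans hj⟩ : Fin s.card) < ⟨j, hj⟩ from hij)
  · simp only [dif_pos hi]
    exact s.orderEmbOfFin_mem rfl _
  · obtain ⟨⟨i, hi⟩, rfl⟩ : a ∈ range f := by rw [s.range_orderEmbOfFin rfl]; exact ha
    exact ⟨i, hi, dif_pos hi⟩

section Glue

variable {X : Type*} {d : X → X → ℝ} {R : X → X → Prop}

theorem IsConvexSTO.exists_split (hd : IsUltrametric d) (hR : IsConvexSTO d R) {n : ℕ}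
    {x : ℕ → X} (hx : Ascends R n x) (hn : 2 ≤ n) :
    ∃ k, 0 < k ∧ k < n ∧ d (x 0) (x (k - 1)) < d (x 0) (x (n - 1)) ∧
      ∀ i j, i < k → k ≤ j → j < n → d (x i) (x j) = d (x 0) (x (n - 1)) := by
  set D := d (x 0) (x (n - 1))
  have hex : ∃ k, d (x 0) (x k) = D := ⟨n - 1, rfl⟩
  set k := Nat.find hex
  have hkD : d (x 0) (x k) = D := Nat.find_spec hex
  have hkn : k ≤ n - 1 := Nat.find_min' hex rfl
  have hk0 : 0 < k := by
    refine Nat.pos_of_ne_zero fun h => ?_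
    rw [h, hd.dist_self] at hkD
    exact (hd.pos (hR.1.ne (hx 0 (n - 1) (by omega) (by omega)))).ne hkD
  have hleft : d (x 0) (x (k - 1)) < D :=
    (hR.dist_le_of_ascends hd hx le_rfl (Nat.zero_le _) (Nat.zero_le _) (by omega)
      (by omega)).lt_of_ne (Nat.find_min hex (by omega))
  have hjump : d (x (k - 1)) (x k) = D := by
    rw [← hkD]
    exact hd.dist_eq_of_lt (by rwa [hd.dist_comm, hkD])
  refine ⟨k, hk0, by omega, hleft, fun i j hi hkj hj => le_antisymm
    (hR.dist_le_of_ascends hd hx (Nat.zero_le i) (by omega) (Nat.zero_le j) (by omega)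
      (by omega)) ?_⟩
  rw [← hjump]
  exact hR.dist_le_of_ascends hd hx (by omega) (by omega) (by omega) hkj hj

theorem glue_of_lt {α : Type*} {k i : ℕ} {u v : ℕ → α} (h : i < k) : glue k u v i = u i :=
  if_pos h

theorem glue_of_le {α : Type*} {k i : ℕ} {u v : ℕ → α} (h : k ≤ i) :
    glue k u v i = v (i - k) :=
  if_neg (not_lt.2 h)

theorem IsConvexSTO.glue (hd : IsUltrametric d) (hR : IsConvexSTO d R) {n k : ℕ}
    {x b u v : ℕ → X} {D : ℝ}
    (hb : ∀ j, k ≤ j → j < n → R (b 0) (b j) ∧ d (b 0) (b j) = D)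
    (hx : ∀ i j, i < k → k ≤ j → j < n → d (x i) (x j) = D)
    (hu : Ascends R k u) (hux : SameDists d k u x) (hub : ∀ i < k, d (u i) (b 0) < D)
    (hv : Ascends R (n - k) v) (hvx : SameDists d (n - k) v fun j => x (k + j))
    (hvb : ∀ i < n - k, ∃ j, k ≤ j ∧ j < n ∧ d (v i) (b j) < D) :
    Ascends R n (glue k u v) ∧ SameDists d n (glue k u v) x ∧
      ∀ i < n, ∃ j < n, d (glue k u v i) (b j) < D := by
  have hcross : ∀ i j, i < k → k ≤ j → j < n →
      R (u i) (v (j - k)) ∧ d (u i) (v (j - k)) = D := by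
    intro i j hi hkj hj
    obtain ⟨l, hkl, hl, hvl⟩ := hvb (j - k) (by omega)
    obtain ⟨hbl, rfl⟩ := hb l hkl hl
    exact ⟨hR.rel_of_near hd hbl (hub i hi) hvl, hd.dist_eq_of_near (hub i hi) hvl⟩
  refine ⟨fun i j hij hj => ?_, fun i j hi hj => ?_, fun i hi => ?_⟩
  · rcases lt_or_ge j k with hjk | hkj
    · rw [glue_of_lt hjk, glue_of_lt (hij.trans hjk)]
      exact hu i j hij hjk
    rw [glue_of_le hkj]
    rcases lt_or_ge i k with hik | hki
    · rw [glue_of_lt hik]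
      exact (hcross i j hik hkj hj).1
    · rw [glue_of_le hki]
      exact hv _ _ (by omega) (by omega)
  · rcases lt_or_ge i k with hik | hki <;> rcases lt_or_ge j k with hjk | hkj
    · rw [glue_of_lt hik, glue_of_lt hjk]
      exact hux i j hik hjk
    · rw [glue_of_lt hik, glue_of_le hkj, hx i j hik hkj hj]
      exact (hcross i j hik hkj hj).2
    · rw [glue_of_le hki, glue_of_lt hjk, hd.dist_comm, hd.dist_comm (x i), hx j i hjk hki hi]
      exact (hcross j i hjk hki hi).2
    · rw [glue_of_le hki, glue_of_le hkj, hvx _ _ (by omega) (by omega)]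
      simp only [Nat.add_sub_cancel' hki, Nat.add_sub_cancel' hkj]
  · rcases lt_or_ge i k with hik | hki
    · exact ⟨0, by omega, by rw [glue_of_lt hik]; exact hub i hik⟩
    · obtain ⟨j, -, hj, h⟩ := hvb (i - k) (by omega)
      exact ⟨j, hj, by rw [glue_of_le hki]; exact h⟩

end Glue

theorem exists_isGreatest_inter_Iio {T : Set ℝ} (hpos : ∀ t ∈ T, 0 < t)
    (hfin : ∀ ε > 0, (T ∩ Ici ε).Finite) {v t₀ : ℝ} (ht₀T : t₀ ∈ T) (ht₀v : t₀ < v) :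
    ∃ m, IsGreatest (T ∩ Iio v) m := by
  obtain ⟨m, ⟨hm, hm₀⟩, hmax⟩ := Set.exists_max_image (T ∩ Iio v ∩ Ici t₀) id
    ((hfin t₀ (hpos t₀ ht₀T)).subset fun t ht => ⟨ht.1.1, ht.2⟩) ⟨t₀, ⟨ht₀T, ht₀v⟩, le_refl t₀⟩
  refine ⟨m, hm, fun t ht => ?_⟩
  rcases le_total t₀ t with h | h
  · exact hmax t ⟨ht, h⟩
  · exact h.trans hm₀

theorem exists_strictAnti_range_eq {T : Set ℝ} (hpos : ∀ t ∈ T, 0 < t)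
    (hfin : ∀ ε > 0, (T ∩ Ici ε).Finite) (hsmall : ∀ ε > 0, ∃ t ∈ T, t < ε) :
    ∃ f : ℕ → ℝ, StrictAnti f ∧ Tendsto f atTop (𝓝 0) ∧ range f = T := by
  have hgreatest : ∀ v : ℝ, ∃ m, 0 < v → IsGreatest (T ∩ Iio v) m := fun v => by
    by_cases hv : 0 < v
    · obtain ⟨t₀, ht₀T, ht₀v⟩ := hsmall v hv
      obtain ⟨m, hm⟩ := exists_isGreatest_inter_Iio hpos hfin ht₀T ht₀v
      exact ⟨m, fun _ => hm⟩
    · exact ⟨0, fun h => absurd h hv⟩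
  choose g hg using hgreatest
  obtain ⟨t₀, ht₀T, -⟩ := hsmall 1 one_pos
  obtain ⟨B, hB⟩ := (hfin t₀ (hpos t₀ ht₀T)).bddAbove
  set v₀ := max B t₀ + 1
  have hv₀ : ∀ t ∈ T, t < v₀ := fun t ht => by
    rcases le_total t₀ t with h | h
    · linarith [hB ⟨ht, h⟩, le_max_left B t₀]
    · linarith [le_max_right B t₀]
  set p : ℕ → ℝ := fun n => g^[n] v₀
  have hp : ∀ n, 0 < p n ∧ IsGreatest (T ∩ Iio (p n)) (p (n + 1)) := by
    intro n
    induction n with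
    | zero =>
      have : 0 < v₀ := hv₀ t₀ ht₀T |>.trans' (hpos t₀ ht₀T)
      exact ⟨this, by simpa [p] using hg v₀ this⟩
    | succ n ih =>
      have : 0 < p (n + 1) := hpos _ ih.2.1.1
      refine ⟨this, ?_⟩
      simpa [p, Function.iterate_succ_apply'] using hg (p (n + 1)) this
  have hanti : StrictAnti fun n => p (n + 1) :=
    strictAnti_nat_of_succ_lt fun n => (hp (n + 1)).2.1.2
  have htend : Tendsto (fun n => p (n + 1)) atTop (𝓝 0) := by
    refine tendsto_order.2 ⟨fun a ha => Eventually.of_forall fun n => ha.trans (hp (n + 1)).1,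
      fun b hb => ?_⟩
    rw [← Nat.cofinite_eq_atTop, eventually_cofinite]
    refine ((hfin b hb).preimage hanti.injective.injOn).subset fun n hn => ?_
    exact ⟨(hp n).2.1.1, le_of_not_gt hn⟩
  refine ⟨fun n => p (n + 1), hanti, htend, ?_⟩
  refine (range_subset_iff.2 fun n => (hp n).2.1.1).antisymm fun t ht => ?_
  by_contra hnot
  have hlt : ∀ n, t < p n := by
    intro n
    induction n with
    | zero => exact hv₀ t ht
    | succ n ih => exact ((hp n).2.2 ⟨ht, ih⟩).lt_of_ne fun h => hnot ⟨n, h.symm⟩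
  obtain ⟨n, hn⟩ := (htend.eventually (gt_mem_nhds (hpos t ht))).exists
  exact (hlt (n + 1)).not_gt hn

theorem finite_range_inter_Ici {u : ℕ → ℝ} (hu : Tendsto u atTop (𝓝 0)) {ε : ℝ} (hε : 0 < ε) :
    (range u ∩ Ici ε).Finite := by
  have hev := hu.eventually (gt_mem_nhds hε)
  rw [← Nat.cofinite_eq_atTop, eventually_cofinite] at hev
  refine (hev.image u).subset ?_
  rintro _ ⟨⟨n, rfl⟩, hn⟩
  exact ⟨n, not_lt.2 hn, rfl⟩

theorem StrictAnti.pos_of_tendsto_zero {f : ℕ → ℝ} (hf : StrictAnti f)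
    (hf0 : Tendsto f atTop (𝓝 0)) (n : ℕ) : 0 < f n :=
  (hf.antitone.le_of_tendsto hf0 (n + 1)).trans_lt (hf n.lt_succ_self)

section Support

variable {S : Set ℝ}

theorem usSupp_of_subset {T : Set ℝ} (hTS : T ⊆ S) (hpos : ∀ t ∈ T, 0 < t)
    (hfin : ∀ ε > 0, (T ∩ Ici ε).Finite) (hsmall : ∀ ε > 0, ∃ t ∈ T, t < ε) {x : S → ℚ}
    (hx : ∀ s, x s ≠ 0 → (s : ℝ) ∈ T) : USsupp S x := by
  obtain ⟨f, hf, hf0, rfl⟩ := exists_strictAnti_range_eq hpos hfin hsmall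
  exact ⟨f, hf, fun i => hTS ⟨i, rfl⟩, hf0, fun s hs => (hx s hs).imp fun i h => h.symm⟩

theorem USsupp.of_support_subset_union {x y z : S → ℚ} (hx : USsupp S x) (hy : USsupp S y)
    (h : ∀ s, z s ≠ 0 → x s ≠ 0 ∨ y s ≠ 0) : USsupp S z := by
  obtain ⟨f, hf, hfS, hf0, hxf⟩ := hx
  obtain ⟨g, hg, hgS, hg0, hyg⟩ := hy
  refine usSupp_of_subset (T := range f ∪ range g) ?_ ?_ (fun ε hε => ?_) (fun ε hε => ?_) ?_
  · rintro _ (⟨n, rfl⟩ | ⟨n, rfl⟩) <;> simp only [hfS, hgS]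
  · rintro _ (⟨n, rfl⟩ | ⟨n, rfl⟩)
    exacts [hf.pos_of_tendsto_zero hf0 n, hg.pos_of_tendsto_zero hg0 n]
  · rw [union_inter_distrib_right]
    exact (finite_range_inter_Ici hf0 hε).union (finite_range_inter_Ici hg0 hε)
  · obtain ⟨n, hn⟩ := (hf0.eventually (gt_mem_nhds hε)).exists
    exact ⟨f n, Or.inl ⟨n, rfl⟩, hn⟩
  · intro s hs
    rcases h s hs with h | h
    · obtain ⟨n, hn⟩ := hxf s h; exact Or.inl ⟨n, hn.symm⟩
    · obtain ⟨n, hn⟩ := hyg s h; exact Or.inr ⟨n, hn.symm⟩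

theorem USsupp.add {x y : S → ℚ} (hx : USsupp S x) (hy : USsupp S y) : USsupp S (x + y) :=
  hx.of_support_subset_union hy fun s h => by
    by_contra! hc
    simp [hc.1, hc.2] at h

theorem USsupp.sub {x y : S → ℚ} (hx : USsupp S x) (hy : USsupp S y) : USsupp S (x - y) :=
  hx.of_support_subset_union hy fun s h => by
    by_contra! hc
    simp [hc.1, hc.2] at h

theorem USsupp.update (hSpos : ∀ s ∈ S, 0 < s) {x : S → ℚ} (hx : USsupp S x) (s : S) (q : ℚ) :
    USsupp S (Function.update x s q) := by
  obtain ⟨f, hf, hfS, hf0, hxf⟩ := hx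
  refine usSupp_of_subset (T := insert (s : ℝ) (range f)) ?_ ?_ (fun ε hε => ?_)
    (fun ε hε => ?_) (fun t ht => ?_)
  · rintro _ (rfl | ⟨n, rfl⟩)
    exacts [s.2, hfS n]
  · rintro _ (rfl | ⟨n, rfl⟩)
    exacts [hSpos s s.2, hf.pos_of_tendsto_zero hf0 n]
  · refine ((finite_range_inter_Ici hf0 hε).insert (s : ℝ)).subset ?_
    rintro t ⟨rfl | ht, hεt⟩
    exacts [mem_insert _ _, mem_insert_of_mem _ ⟨ht, hεt⟩]
  · obtain ⟨n, hn⟩ := (hf0.eventually (gt_mem_nhds hε)).exists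
    exact ⟨f n, Or.inr ⟨n, rfl⟩, hn⟩
  · by_cases hts : t = s
    · exact Or.inl (congrArg Subtype.val hts)
    · rw [Function.update_of_ne hts] at ht
      obtain ⟨n, hn⟩ := hxf t ht
      exact Or.inr ⟨n, hn.symm⟩

theorem usSupp_zero (hSpos : ∀ s ∈ S, 0 < s) (hacc : ∀ ε > 0, ∃ s ∈ S, s < ε) :
    USsupp S 0 := by
  choose u huS hu using fun n : ℕ => hacc (1 / (n + 1)) Nat.one_div_pos_of_nat
  have hu0 : Tendsto u atTop (𝓝 0) :=
    tendsto_of_tendsto_of_tendsto_of_le_of_le tendsto_const_nhds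
      tendsto_one_div_add_atTop_nhds_zero_nat (fun n => (hSpos _ (huS n)).le) fun n => (hu n).le
  refine usSupp_of_subset (T := range u) (range_subset_iff.2 huS)
    (by rintro _ ⟨n, rfl⟩; exact hSpos _ (huS n)) (fun ε hε => finite_range_inter_Ici hu0 hε)
    (fun ε hε => ?_) (fun s hs => absurd rfl hs)
  obtain ⟨n, hn⟩ := (hu0.eventually (gt_mem_nhds hε)).exists
  exact ⟨u n, ⟨n, rfl⟩, hn⟩

end Support

section Distance

variable {S : Set ℝ}

theorem dU_self (x : US S) : dU S x x = 0 := if_pos rfl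

theorem dU_congr {x y x' y' : US S} (h : ∀ t, x.1 t = y.1 t ↔ x'.1 t = y'.1 t) :
    dU S x y = dU S x' y' := by
  have hxy : x = y ↔ x' = y' :=
    ⟨fun he => Subtype.ext (funext fun t => (h t).1 (by rw [he])),
      fun he => Subtype.ext (funext fun t => (h t).2 (by rw [he]))⟩
  unfold dU
  simp only [hxy, h]

variable (hSpos : ∀ s ∈ S, 0 < s)
include hSpos

theorem exists_dU_eq {x y : US S} (hxy : x ≠ y) :
    ∃ s : S, dU S x y = s ∧ x.1 s ≠ y.1 s ∧ ∀ t : S, (s : ℝ) < t → x.1 t = y.1 t := by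
  obtain ⟨e, he⟩ : ∃ e, x.1 e ≠ y.1 e := by
    by_contra! h
    exact hxy (Subtype.ext (funext h))
  obtain ⟨f, -, -, hf0, hxf⟩ := x.2
  obtain ⟨g, -, -, hg0, hyg⟩ := y.2
  have he0 : 0 < (e : ℝ) := hSpos e e.2
  have hfin : {t : S | x.1 t ≠ y.1 t ∧ (e : ℝ) ≤ t}.Finite := by
    refine (((finite_range_inter_Ici hf0 he0).union (finite_range_inter_Ici hg0 he0)).preimage
      Subtype.val_injective.injOn).subset ?_
    rintro t ⟨ht, het⟩
    by_cases hx0 : x.1 t = 0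
    · obtain ⟨n, hn⟩ := hyg t fun hy0 => ht (hx0.trans hy0.symm)
      exact Or.inr ⟨⟨n, hn.symm⟩, het⟩
    · obtain ⟨n, hn⟩ := hxf t hx0
      exact Or.inl ⟨⟨n, hn.symm⟩, het⟩
  obtain ⟨s, ⟨hs, hes⟩, hmax⟩ :=
    Set.exists_max_image _ (fun t : S => (t : ℝ)) hfin ⟨e, he, le_rfl⟩
  have habove : ∀ t : S, (s : ℝ) < t → x.1 t = y.1 t := fun t hst => by
    by_contra h
    exact (hmax t ⟨h, hes.trans hst.le⟩).not_gt hst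
  refine ⟨s, ?_, hs, habove⟩
  rw [dU, if_neg hxy]
  refine IsLeast.csInf_eq ⟨⟨s.2, habove⟩, fun r ⟨_, hr⟩ => ?_⟩
  by_contra! hrs
  exact hs (hr s hrs)

theorem dU_nonneg (x y : US S) : 0 ≤ dU S x y := by
  by_cases hxy : x = y
  · rw [hxy, dU_self]
  · obtain ⟨s, hd, -⟩ := exists_dU_eq hSpos hxy
    exact hd ▸ (hSpos s s.2).le

theorem dU_mem {x y : US S} (hxy : x ≠ y) : dU S x y ∈ S := by
  obtain ⟨s, hd, -⟩ := exists_dU_eq hSpos hxy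
  exact hd ▸ s.2

theorem dU_le_iff {x y : US S} {r : ℝ} (hr : 0 ≤ r) :
    dU S x y ≤ r ↔ ∀ t : S, r < t → x.1 t = y.1 t := by
  by_cases hxy : x = y
  · simp [hxy, dU_self, hr]
  obtain ⟨s, hd, hs, habove⟩ := exists_dU_eq hSpos hxy
  rw [hd]
  exact ⟨fun h t ht => habove t (h.trans_lt ht), fun h => not_lt.1 fun hrs => hs (h s hrs)⟩

theorem dU_lt_iff {x y : US S} {r : ℝ} (hr : 0 < r) :
    dU S x y < r ↔ ∀ t : S, r ≤ t → x.1 t = y.1 t := by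
  by_cases hxy : x = y
  · simp [hxy, dU_self, hr]
  obtain ⟨s, hd, hs, habove⟩ := exists_dU_eq hSpos hxy
  rw [hd]
  exact ⟨fun h t ht => habove t (h.trans_le ht), fun h => not_le.1 fun hrs => hs (h s hrs)⟩

theorem dU_eq_of_ne_of_eq_above {x y : US S} {s : S} (hs : x.1 s ≠ y.1 s)
    (habove : ∀ t : S, (s : ℝ) < t → x.1 t = y.1 t) : dU S x y = s :=
  le_antisymm ((dU_le_iff hSpos (hSpos s s.2).le).2 habove)
    (not_lt.1 fun h => hs ((dU_lt_iff hSpos (hSpos s s.2)).1 h s le_rfl))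

theorem dU_isUltrametric : IsUltrametric (dU S) where
  dist_self := dU_self
  eq_of_dist_eq_zero {x y} h := by
    by_contra hxy
    obtain ⟨s, hd, -⟩ := exists_dU_eq hSpos hxy
    exact (hSpos s s.2).ne' (hd ▸ h)
  dist_comm x y := dU_congr fun _ => eq_comm
  dist_le_max x y z := by
    refine (dU_le_iff hSpos (le_max_of_le_left (dU_nonneg hSpos x y))).2 fun t ht => ?_
    rw [(dU_le_iff hSpos (dU_nonneg hSpos x y)).1 le_rfl t (lt_of_le_of_lt (le_max_left _ _) ht),
      (dU_le_iff hSpos (dU_nonneg hSpos y z)).1 le_rfl t (lt_of_le_of_lt (le_max_right _ _) ht)]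

theorem exists_level_between (hacc : ∀ ε > 0, ∃ s ∈ S, s < ε) {x y : US S} {D : ℝ}
    (h : dU S x y < D) : ∃ L ∈ S, dU S x y ≤ L ∧ L < D := by
  by_cases hxy : x = y
  · rw [hxy, dU_self] at h ⊢
    obtain ⟨L, hL, hLD⟩ := hacc D h
    exact ⟨L, hL, (hSpos L hL).le, hLD⟩
  · exact ⟨_, dU_mem hSpos hxy, le_rfl, h⟩

end Distance

section Realization

variable {S : Set ℝ} (hSpos : ∀ s ∈ S, 0 < s)
include hSpos

theorem exists_ascends_equidistant {R : US S → US S → Prop} (hR : IsSTO R) (c : US S) {M : ℝ}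
    (hM : M ∈ S) (n : ℕ) :
    ∃ b : ℕ → US S, Ascends R n b ∧ (∀ i j, i < j → j < n → dU S (b i) (b j) = M) ∧
      ∀ i < n, dU S (b i) c ≤ M := by
  let p : ℕ → US S := fun q => ⟨Function.update c.1 ⟨M, hM⟩ q, c.2.update hSpos _ _⟩
  have hp : Function.Injective p := fun q q' h => by
    simpa [p] using congrFun (congrArg Subtype.val h) ⟨M, hM⟩
  have habove : ∀ q, ∀ t : S, M < t → (p q).1 t = c.1 t := fun q t ht =>
    Function.update_of_ne (fun h => ht.ne (congrArg Subtype.val h).symm) _ _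
  have : Nonempty (US S) := ⟨c⟩
  obtain ⟨b, hb, hbp, -⟩ := hR.exists_ascends_enumeration ((Finset.range n).image p)
  rw [Finset.card_image_of_injective _ hp, Finset.card_range] at hb hbp
  refine ⟨b, hb, fun i j hij hj => ?_, fun i hi => ?_⟩
  · obtain ⟨q, -, hq⟩ := Finset.mem_image.1 (hbp i (hij.trans hj))
    obtain ⟨q', -, hq'⟩ := Finset.mem_image.1 (hbp j hj)
    have hqq' : q ≠ q' := by
      rintro rfl
      exact hR.ne (hb i j hij hj) (hq.symm.trans hq')
    rw [← hq, ← hq']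
    exact dU_eq_of_ne_of_eq_above hSpos (s := ⟨M, hM⟩) (by simpa [p] using hqq')
      fun t ht => by rw [habove q t ht, habove q' t ht]
  · obtain ⟨q, -, hq⟩ := Finset.mem_image.1 (hbp i hi)
    rw [← hq]
    exact (dU_le_iff hSpos (hSpos M hM).le).2 (habove q)

theorem exists_ascends_equidistant_near {R : US S → US S → Prop} (hR : IsSTO R) {n : ℕ}
    {b : ℕ → US S} (hb : Ascends R n b) {M : ℝ}
    (hbM : ∀ i j, i < j → j < n → dU S (b i) (b j) = M) {D : ℝ} (hD : D ∈ S) (hDM : D ≤ M)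
    (hn : 0 < n) :
    ∃ c : ℕ → US S, Ascends R n c ∧ (∀ i j, i < j → j < n → dU S (c i) (c j) = D) ∧
      ∀ j < n, ∃ l < n, dU S (c j) (b l) < M := by
  rcases hDM.eq_or_lt with rfl | hDM
  · exact ⟨b, hb, hbM, fun j hj => ⟨j, hj, by rw [dU_self]; exact hSpos D hD⟩⟩
  · obtain ⟨c, hc, hcD, hcb⟩ := exists_ascends_equidistant hSpos hR (b 0) hD n
    exact ⟨c, hc, hcD, fun j hj => ⟨0, hn, (hcb j hj).trans_lt hDM⟩⟩

variable (hacc : ∀ ε > 0, ∃ s ∈ S, s < ε)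
include hacc

theorem exists_ascends_sameDists_near {R R' : US S → US S → Prop} (hR : IsConvexSTO (dU S) R)
    (hR' : IsConvexSTO (dU S) R') (n : ℕ) :
    ∀ x : ℕ → US S, Ascends R' n x → ∀ M ∈ S, dU S (x 0) (x (n - 1)) ≤ M →
    ∀ b : ℕ → US S, Ascends R n b → (∀ i j, i < j → j < n → dU S (b i) (b j) = M) →
    ∃ a, Ascends R n a ∧ SameDists (dU S) n a x ∧ ∀ i < n, ∃ j < n, dU S (a i) (b j) < M := by
  induction n using Nat.strong_induction_on with
  | _ n IH =>
  intro x hx M hM hxM b hb hbM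
  have hd := dU_isUltrametric hSpos
  rcases lt_or_ge n 2 with hn | hn
  · refine ⟨b, hb, fun i j hi hj => ?_, fun i hi => ⟨i, hi, ?_⟩⟩
    · obtain rfl : i = j := by omega
      rw [dU_self, dU_self]
    · rw [dU_self]
      exact hSpos M hM
  obtain ⟨k, hk0, hkn, hleft, hcross⟩ := hR'.exists_split hd hx hn
  set D := dU S (x 0) (x (n - 1))
  have hD : D ∈ S := dU_mem hSpos (hR'.1.ne (hx 0 (n - 1) (by omega) (by omega)))
  obtain ⟨c, hc, hcD, hcb⟩ :=
    exists_ascends_equidistant_near hSpos hR.1 hb hbM hD hxM (by omega)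
  obtain ⟨L, hL, hxL, hLD⟩ := exists_level_between hSpos hacc hleft
  obtain ⟨bL, hbL, hbLL, hbLc⟩ := exists_ascends_equidistant hSpos hR.1 (c 0) hL k
  obtain ⟨u, hu, hux, hub⟩ := IH k hkn x (hx.mono hkn.le) L hL hxL bL hbL hbLL
  have hxD : dU S (x k) (x (k + (n - k - 1))) ≤ D := by
    rw [show k + (n - k - 1) = n - 1 by omega]
    exact hR'.dist_le_of_ascends hd hx (Nat.zero_le k) (by omega) (Nat.zero_le _) le_rfl
      (by omega)
  obtain ⟨v, hv, hvx, hvb⟩ := IH (n - k) (by omega) (fun j => x (k + j)) (hx.shift k) D hD hxD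
    (fun j => c (k + j)) (hc.shift k) fun i j hij hj => hcD _ _ (by omega) (by omega)
  obtain ⟨hga, hgd, hgc⟩ := hR.glue hd (b := c)
    (fun j hkj hj => ⟨hc 0 j (by omega) hj, hcD 0 j (by omega) hj⟩) hcross hu hux
    (fun i hi => by
      obtain ⟨j, hj, hij⟩ := hub i hi
      exact (hd.dist_le_max _ (bL j) _).trans_lt ((max_le hij.le (hbLc j hj)).trans_lt hLD))
    hv hvx fun i hi => by
      obtain ⟨j, hj, hij⟩ := hvb i hi
      exact ⟨k + j, by omega, by omega, hij⟩
  refine ⟨glue k u v, hga, hgd, fun i hi => ?_⟩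
  obtain ⟨j, hj, hij⟩ := hgc i hi
  obtain ⟨l, hl, hjl⟩ := hcb j hj
  exact ⟨l, hl, (hd.dist_le_max _ (c j) _).trans_lt (max_lt (hij.trans_le hxM) hjl)⟩

theorem exists_ascends_sameDists {R R' : US S → US S → Prop} (hR : IsConvexSTO (dU S) R)
    (hR' : IsConvexSTO (dU S) R') {n : ℕ} {x : ℕ → US S} (hx : Ascends R' n x) :
    ∃ a, Ascends R n a ∧ SameDists (dU S) n a x := by
  obtain ⟨M, hM, hxM, -⟩ :=
    exists_level_between hSpos hacc (lt_add_one (dU S (x 0) (x (n - 1))))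
  obtain ⟨b, hb, hbM, -⟩ := exists_ascends_equidistant hSpos hR.1 (x 0) hM n
  obtain ⟨a, ha, hax, -⟩ :=
    exists_ascends_sameDists_near hSpos hacc hR hR' n x hx M hM hxM b hb hbM
  exact ⟨a, ha, hax⟩

end Realization

section Isometry

variable {S : Set ℝ}

def US.translate (z a b : US S) : US S := ⟨z.1 - a.1 + b.1, (z.2.sub a.2).add b.2⟩

theorem US.translate_apply (z a b : US S) (t : S) :
    (z.translate a b).1 t = z.1 t - a.1 t + b.1 t := rfl

theorem US.translate_translate (z a b : US S) : (z.translate a b).translate b a = z :=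
  Subtype.ext (funext fun t => by simp only [US.translate_apply]; ring)

noncomputable def swapU (c₁ c₂ z : US S) : US S :=
  if dU S z c₁ < dU S c₁ c₂ then z.translate c₁ c₂
  else if dU S z c₂ < dU S c₁ c₂ then z.translate c₂ c₁ else z

variable (hSpos : ∀ s ∈ S, 0 < s)
include hSpos

theorem dU_translate_lt {z a b : US S} {u : ℝ} (hu : 0 < u) (hz : dU S z a < u) :
    dU S (z.translate a b) b < u :=
  (dU_lt_iff hSpos hu).2 fun t ht => by
    rw [US.translate_apply, (dU_lt_iff hSpos hu).1 hz t ht, sub_self, zero_add]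

theorem swapU_apply_of_gt {c₁ c₂ : US S} (z : US S) {t : S} (ht : dU S c₁ c₂ < t) :
    (swapU c₁ c₂ z).1 t = z.1 t := by
  have hc := (dU_le_iff hSpos (dU_nonneg hSpos c₁ c₂)).1 le_rfl t ht
  unfold swapU
  split_ifs <;> simp only [US.translate_apply, hc, sub_add_cancel]

theorem swapU_swapU {c₁ c₂ : US S} (hne : c₁ ≠ c₂) (z : US S) :
    swapU c₁ c₂ (swapU c₁ c₂ z) = z := by
  have hd := dU_isUltrametric hSpos
  have hu := hd.pos hne
  have hfar : ∀ w, dU S w c₂ < dU S c₁ c₂ → ¬ dU S w c₁ < dU S c₁ c₂ := fun w h₂ h₁ =>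
    (hd.dist_le_max c₁ w c₂).not_gt (max_lt (by rwa [hd.dist_comm]) h₂)
  by_cases h₁ : dU S z c₁ < dU S c₁ c₂
  · have h₂ := dU_translate_lt hSpos (b := c₂) hu h₁
    simp only [swapU, h₁, h₂, hfar _ h₂, if_true, if_false, US.translate_translate]
  by_cases h₂ : dU S z c₂ < dU S c₁ c₂
  · have h₁' := dU_translate_lt hSpos (b := c₁) hu h₂
    simp only [swapU, h₁, h₂, h₁', if_true, if_false, US.translate_translate]
  · simp only [swapU, h₁, h₂, if_false]

theorem dU_swapU_le (c₁ c₂ z z' : US S) :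
    dU S (swapU c₁ c₂ z) (swapU c₁ c₂ z') ≤ dU S z z' := by
  have hd := dU_isUltrametric hSpos
  refine (dU_le_iff hSpos (hd.nonneg z z')).2 fun t ht => ?_
  have hzt := (dU_le_iff hSpos (hd.nonneg z z')).1 le_rfl t ht
  rcases lt_or_ge (dU S z z') (dU S c₁ c₂) with hzz' | hzz'
  · simp only [swapU, hd.dist_lt_iff_of_dist_lt hzz']
    split_ifs <;> simp only [US.translate_apply, hzt]
  · rw [swapU_apply_of_gt hSpos z (hzz'.trans_lt ht), swapU_apply_of_gt hSpos z' (hzz'.trans_lt ht),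
      hzt]

theorem exists_isoU_swap {c₁ c₂ : US S} (hne : c₁ ≠ c₂) :
    ∃ g : IsoU S, g.1 c₁ = c₂ ∧
      ∀ z, dU S c₁ c₂ ≤ dU S z c₁ → dU S c₁ c₂ ≤ dU S z c₂ → g.1 z = z := by
  have hiso : ∀ z z', dU S (swapU c₁ c₂ z) (swapU c₁ c₂ z') = dU S z z' := fun z z' =>
    le_antisymm (dU_swapU_le hSpos _ _ _ _) (by
      simpa only [swapU_swapU hSpos hne] using
        dU_swapU_le hSpos c₁ c₂ (swapU c₁ c₂ z) (swapU c₁ c₂ z'))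
  refine ⟨⟨⟨swapU c₁ c₂, swapU c₁ c₂, swapU_swapU hSpos hne, swapU_swapU hSpos hne⟩, hiso⟩,
    ?_, fun z h₁ h₂ => ?_⟩
  · show swapU c₁ c₂ c₁ = c₂
    rw [swapU, if_pos (by rw [dU_self]; exact (dU_isUltrametric hSpos).pos hne)]
    exact Subtype.ext (funext fun t => by simp only [US.translate_apply, sub_self, zero_add])
  · show swapU c₁ c₂ z = z
    rw [swapU, if_neg h₁.not_gt, if_neg h₂.not_gt]

end Isometry

def IsoU.refl (S : Set ℝ) : IsoU S := ⟨Equiv.refl _, fun _ _ => rfl⟩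

section Extension

variable {S : Set ℝ}

def IsoU.trans (g h : IsoU S) : IsoU S :=
  ⟨g.1.trans h.1, fun x y => by simp only [Equiv.trans_apply, h.2, g.2]⟩

theorem exists_isoU_extend (hSpos : ∀ s ∈ S, 0 < s) (n : ℕ) :
    ∀ a b : ℕ → US S, SameDists (dU S) n a b → ∃ g : IsoU S, ∀ i < n, g.1 (a i) = b i := by
  induction n with
  | zero => exact fun a b _ => ⟨IsoU.refl S, fun i hi => absurd hi (Nat.not_lt_zero i)⟩
  | succ n ih =>
    intro a b hab
    have hd := dU_isUltrametric hSpos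
    obtain ⟨h, hh⟩ := ih a b fun i j hi hj => hab i j (by omega) (by omega)
    by_cases hn : h.1 (a n) = b n
    · refine ⟨h, fun i hi => ?_⟩
      rcases Nat.lt_succ_iff_lt_or_eq.1 hi with hi | rfl
      exacts [hh i hi, hn]
    obtain ⟨g, hg, hgfix⟩ := exists_isoU_swap hSpos hn
    refine ⟨h.trans g, fun i hi => ?_⟩
    show g.1 (h.1 (a i)) = b i
    rcases Nat.lt_succ_iff_lt_or_eq.1 hi with hi | rfl
    · have hbi : dU S (b i) (h.1 (a n)) = dU S (b i) (b n) := by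
        conv_lhs => rw [← hh i hi, h.2, hab i n (by omega) (by omega)]
      have hle := hd.dist_le_max (h.1 (a n)) (b i) (b n)
      rw [hd.dist_comm (h.1 (a n)) (b i), hbi, max_self] at hle
      rw [hh i hi]
      exact hgfix (b i) (by rwa [hbi]) hle
    · exact hg

end Extension

theorem exists_finset_of_isOpen {A B C : Type*} [TopologicalSpace C] {O : Set (A → B → C)}
    (hO : IsOpen O) {h₀ : A → B → C} (h₀O : h₀ ∈ O) :
    ∃ t : Finset (A × B), ∀ h : A → B → C, (∀ p ∈ t, h p.1 p.2 = h₀ p.1 p.2) → h ∈ O := by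
  obtain ⟨t, u, hu, hsub⟩ := isOpen_pi_iff.1 (hO.preimage Homeomorph.piCurry.continuous)
    (Function.uncurry h₀) h₀O
  refine ⟨t, fun h hh =>
    show Function.uncurry h ∈ Homeomorph.piCurry ⁻¹' O from hsub fun p hp => ?_⟩
  show h p.1 p.2 ∈ u p
  rw [hh p hp]
  exact (hu p hp).2

theorem cLOU_minimal_flow_general
    (S : Set ℝ) (hSpos : ∀ s ∈ S, 0 < s)
    (hacc : ∀ ε > 0, ∃ s ∈ S, s < ε) :
    ∀ r : cLOU S, Dense (Set.range fun g : IsoU S => actU S g r) := by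
  intro r r'
  refine mem_closure_iff.2 fun o ho hr'o => ?_
  obtain ⟨O, hO, rfl⟩ := isOpen_induced_iff.1 ho
  obtain ⟨t, ht⟩ := exists_finset_of_isOpen hO hr'o
  have : Nonempty (US S) := ⟨⟨0, usSupp_zero hSpos hacc⟩⟩
  obtain ⟨x, hx, -, hxt⟩ :=
    r'.2.1.exists_ascends_enumeration (t.image Prod.fst ∪ t.image Prod.snd)
  obtain ⟨a, ha, hax⟩ := exists_ascends_sameDists hSpos hacc r.2 r'.2 hx
  obtain ⟨g, hg⟩ := exists_isoU_extend hSpos _ a x hax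
  refine ⟨actU S g r, ht _ fun p hp => ?_, g, rfl⟩
  obtain ⟨i, hi, hpi⟩ := hxt p.1 (Finset.mem_union_left _ (Finset.mem_image_of_mem _ hp))
  obtain ⟨j, hj, hpj⟩ := hxt p.2 (Finset.mem_union_right _ (Finset.mem_image_of_mem _ hp))
  show r.1 (g.1.symm p.1) (g.1.symm p.2) = r'.1 p.1 p.2
  rw [← hpi, ← hpj, g.1.symm_apply_eq.2 (hg i hi).symm, g.1.symm_apply_eq.2 (hg j hj).symm,
    Bool.eq_iff_iff, r.2.1.rel_iff_of_ascends ha hi hj, r'.2.1.rel_iff_of_ascends hx hi hj]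

/-- Every orbit of the action of `iso(U_S)` on `cLO(U_S)` is dense: the flow
`cLO(U_S)` is minimal. -/
theorem cLOU_minimal_flow
    (S : Set ℝ) (hScount : S.Countable) (hSpos : ∀ s ∈ S, 0 < s)
    (hacc : ∀ ε > 0, ∃ s ∈ S, s < ε) :
    ∀ r : cLOU S, Dense (Set.range fun g : IsoU S => actU S g r) :=
  cLOU_minimal_flow_general S hSpos hacc
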